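/- arXiv:math-ph/0404047 — 5 statements merged into one kernel-verified Lean document; each statement's English description precedes it below -/
import Mathlib

section
/- Let η > 0, and for a pair of functions (λ₊, λ₋) defined by λ₊(p) = μ₊(p) + T(p)μ₋(p) + R(p)μ₊(-p) and λ₋(p) = T(-p)μ₊(p) + μ₋(p) + R(-p)μ₋(-p), where T(p) = p/(p+iη), R(p) = -iη/(p+iη), and μ₊, μ₋ are arbitrary complex-valued functions on ℝ. Then for all real p and both signs ±: λ_±(p) = T(±p)λ_∓(p) + R(±p)λ_±(-p). -/
open Complex

theorem lambda_reflection_transmission (η : ℝ) (hη : 0 < η)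
    (T R : ℝ → ℂ)
    (hT : ∀ p : ℝ, T p = (p : ℂ) / ((p : ℂ) + η * I))
    (hR : ∀ p : ℝ, R p = (-I * η) / ((p : ℂ) + η * I))
    (μp μm lamP lamM : ℝ → ℂ)
    (hlamP : ∀ p : ℝ, lamP p = μp p + T p * μm p + R p * μp (-p))
    (hlamM : ∀ p : ℝ, lamM p = T (-p) * μp p + μm p + R (-p) * μm (-p)) :
    ∀ p : ℝ,
      lamP p = T p * lamM p + R p * lamP (-p) ∧
      lamM p = T (-p) * lamP p + R (-p) * lamM (-p) := by
  intro p
  have h1 : ((p : ℂ) + η * I) ≠ 0 := by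
    intro h
    have := congrArg Complex.im h
    simp at this
    exact hη.ne' this
  have h2 : (-(p : ℂ) + η * I) ≠ 0 := by
    intro h
    have := congrArg Complex.im h
    simp at this
    exact hη.ne' this
  constructor <;>
  · simp only [hlamP, hlamM, hT, hR, neg_neg]
    push_cast
    field_simp
    ring
end

section
/- Let η > 0, and define β₊(p) = ½(λ₊(p) + λ₋(-p)) and β₋(p) = ½(λ₊(p) - λ₋(-p)). If λ₊ and λ₋ satisfy the reflection-transmission property λ_±(p) = T(±p)λ_∓(p) + R(±p)λ_±(-p) with T(p) = p/(p+iη), R(p) = -iη/(p+iη), then β_α(p) = B_α(p)·β_α(-p) for both α ∈ {+1,-1}, where B_α(p) = α(p - iαη)/(p + iη). -/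
open Complex

theorem beta_reflection_property (η : ℝ) (hη : 0 < η)
    (T R : ℝ → ℂ)
    (hT : ∀ p : ℝ, T p = (p : ℂ) / ((p : ℂ) + η * I))
    (hR : ∀ p : ℝ, R p = (-I * η) / ((p : ℂ) + η * I))
    (lamP lamM : ℝ → ℂ)
    (hlamP : ∀ p : ℝ, lamP p = T p * lamM p + R p * lamP (-p))
    (hlamM : ∀ p : ℝ, lamM p = T (-p) * lamP p + R (-p) * lamM (-p))
    (βp βm : ℝ → ℂ)
    (hβp : ∀ p : ℝ, βp p = (lamP p + lamM (-p)) / 2)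
    (hβm : ∀ p : ℝ, βm p = (lamP p - lamM (-p)) / 2)
    (B : ℝ → ℝ → ℂ)
    (hB : ∀ α : ℝ, ∀ p : ℝ,
      B α p = α * ((p : ℂ) - I * α * η) / ((p : ℂ) + I * η)) :
    ∀ p : ℝ, βp p = B 1 p * βp (-p) ∧ βm p = B (-1) p * βm (-p) := by
  intro p
  have hd : (p : ℂ) + (η : ℂ) * I ≠ 0 := by
    intro h
    have him := congrArg Complex.im h
    simp at him
    exact absurd him (ne_of_gt hη)
  have hd' : (p : ℂ) + I * (η : ℂ) ≠ 0 := by rwa [mul_comm]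
  have hM := hlamM (-p)
  simp only [neg_neg] at hM
  constructor
  · rw [hβp, hβp, hlamP p, hM, hB, hT, hR]
    push_cast
    field_simp
    ring
  · rw [hβm, hβm, hlamP p, hM, hB, hT, hR]
    push_cast
    field_simp
    ring
end

section
/- Let η > 0 and define μ₊(k) = (μ₀(k) + (k - iη)μ₁(k))/(k - iη + 1) and μ₋(k) = -(μ₀(-k) + (k + iη)μ₁(k))/(k + iη + 1), where μ₀ is an arbitrary function and μ₁ is an even function. Then with λ_±(p) = μ_±(p) + T(±p)μ_∓(p) + R(±p)μ_±(-p), T(p) = p/(p+iη), R(p) = -iη/(p+iη), and β₊(p) = ½(λ₊(p) + λ₋(-p)), β₋(p) = ½(λ₊(p) - λ₋(-p)), one has for all real k: β₊(-k)/(k + iη) - β₋(-k) = 0. -/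
open Complex

set_option maxHeartbeats 1000000 in
theorem aux_vanish {F : Type*} [Field F] (k s a b c : F)
    (h1 : k + s ≠ 0) (h2 : -k + s ≠ 0)
    (h3 : k - s + 1 ≠ 0) (h4 : -k - s + 1 ≠ 0)
    (h5 : k + s + 1 ≠ 0) (h6 : -k + s + 1 ≠ 0)
    (h7 : (2:F) ≠ 0) :
    ((( (a + (-k - s) * c) / (-k - s + 1)
        + (-k)/(-k + s) * (-((b + (-k + s) * c) / (-k + s + 1)))
        + (-s)/(-k + s) * ((b + (k - s) * c) / (k - s + 1)))
      + ( (-k)/(-k + s) * ((b + (k - s) * c) / (k - s + 1))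
        + (-((a + (k + s) * c) / (k + s + 1)))
        + (-s)/(-k + s) * (-((b + (-k + s) * c) / (-k + s + 1))))) / 2) / (k + s)
    - ((( (a + (-k - s) * c) / (-k - s + 1)
        + (-k)/(-k + s) * (-((b + (-k + s) * c) / (-k + s + 1)))
        + (-s)/(-k + s) * ((b + (k - s) * c) / (k - s + 1)))
      - ( (-k)/(-k + s) * ((b + (k - s) * c) / (k - s + 1))
        + (-((a + (k + s) * c) / (k + s + 1)))
        + (-s)/(-k + s) * (-((b + (-k + s) * c) / (-k + s + 1))))) / 2) = 0 := by
  field_simp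
  ring

set_option maxHeartbeats 1000000 in
theorem special_function_vanishes (η : ℝ) (hη : 0 < η)
    (μ0 μ1 : ℝ → ℂ) (hμ1 : ∀ k : ℝ, μ1 (-k) = μ1 k)
    (μp μm : ℝ → ℂ)
    (hμp : ∀ k : ℝ, μp k = (μ0 k + ((k : ℂ) - I * η) * μ1 k) / ((k : ℂ) - I * η + 1))
    (hμm : ∀ k : ℝ, μm k = -((μ0 (-k) + ((k : ℂ) + I * η) * μ1 k) / ((k : ℂ) + I * η + 1)))
    (T R : ℝ → ℂ)
    (hT : ∀ p : ℝ, T p = (p : ℂ) / ((p : ℂ) + η * I))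
    (hR : ∀ p : ℝ, R p = (-I * η) / ((p : ℂ) + η * I))
    (lamP lamM : ℝ → ℂ)
    (hlamP : ∀ p : ℝ, lamP p = μp p + T p * μm p + R p * μp (-p))
    (hlamM : ∀ p : ℝ, lamM p = T (-p) * μp p + μm p + R (-p) * μm (-p))
    (βp βm : ℝ → ℂ)
    (hβp : ∀ p : ℝ, βp p = (lamP p + lamM (-p)) / 2)
    (hβm : ∀ p : ℝ, βm p = (lamP p - lamM (-p)) / 2) :
    ∀ k : ℝ, βp (-k) / ((k : ℂ) + I * η) - βm (-k) = 0 := by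
  intro k
  have hne : ∀ a : ℝ, (a : ℂ) + I * η ≠ 0 := by
    intro a h
    have := congrArg Complex.im h
    simp [Complex.add_im, Complex.mul_im] at this
    exact hη.ne' this
  have hne' : ∀ a : ℝ, (a : ℂ) - I * η + 1 ≠ 0 := by
    intro a h
    have := congrArg Complex.im h
    simp [Complex.add_im, Complex.sub_im, Complex.mul_im] at this
    exact hη.ne' this
  have hne'' : ∀ a : ℝ, (a : ℂ) + I * η + 1 ≠ 0 := by
    intro a h
    have := congrArg Complex.im h
    simp [Complex.add_im, Complex.mul_im] at this
    exact hη.ne' this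
  have h1 : (k : ℂ) + I * η ≠ 0 := hne k
  have h2 : -(k : ℂ) + I * η ≠ 0 := by
    have := hne (-k); rwa [Complex.ofReal_neg] at this
  have h3 : (k : ℂ) - I * η + 1 ≠ 0 := hne' k
  have h4 : -(k : ℂ) - I * η + 1 ≠ 0 := by
    have := hne' (-k); rwa [Complex.ofReal_neg] at this
  have h5 : (k : ℂ) + I * η + 1 ≠ 0 := hne'' k
  have h6 : -(k : ℂ) + I * η + 1 ≠ 0 := by
    have := hne'' (-k); rwa [Complex.ofReal_neg] at this
  have key := aux_vanish (F := ℂ) (k : ℂ) (I * η) (μ0 (-k)) (μ0 k) (μ1 k)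
    h1 h2 h3 h4 h5 h6 two_ne_zero
  have hc : ((η : ℂ)) * I = I * (η : ℂ) := mul_comm _ _
  simp only [hβp, hβm, hlamP, hlamM, hμp, hμm, hT, hR, hμ1, neg_neg,
    Complex.ofReal_neg, hc]
  linear_combination key
end

section
/- If f ∈ C_0^∞(ℝⁿ) (smooth with compact support) and its Fourier transform F(x₁,…,xₙ) = ∫ f(p₁,…,pₙ) exp(-i Σⱼ pⱼxⱼ + it Σⱼ pⱼ²) dp vanishes on a nonempty open subset U of ℝⁿ, then f = 0. -/
open Complex MeasureTheory

open scoped FourierTransform Real Topology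

theorem fourier_analytic_vanishing (n : ℕ) (hn : 1 ≤ n) (t : ℝ)
    (f : EuclideanSpace ℝ (Fin n) → ℂ)
    (hf_smooth : ContDiff ℝ (⊤ : ℕ∞) f) (hf_supp : HasCompactSupport f)
    (F : EuclideanSpace ℝ (Fin n) → ℂ)
    (hF : ∀ x, F x = ∫ p : EuclideanSpace ℝ (Fin n),
      f p * Complex.exp (-I * (inner ℝ p x : ℝ) + I * t * (‖p‖ ^ 2 : ℝ)))
    (U : Set (EuclideanSpace ℝ (Fin n))) (hU : IsOpen U) (hUne : U.Nonempty)
    (hFU : ∀ x ∈ U, F x = 0) :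
    f = 0 := by
  set g : EuclideanSpace ℝ (Fin n) → ℂ := fun p => f p * Complex.exp (I * t * (‖p‖ ^ 2 : ℝ)) with hg_def
  have hf_cont : Continuous f := hf_smooth.continuous
  have hg_cont : Continuous g := by
    apply hf_cont.mul
    apply Complex.continuous_exp.comp
    fun_prop
  have hg_supp : HasCompactSupport g := hf_supp.mul_right
  have hg_int : Integrable g := hg_cont.integrable_of_hasCompactSupport hg_supp
  have hF' : ∀ x, F x = ∫ p, g p * Complex.exp (-I * ((inner ℝ p x : ℝ) : ℝ)) := by
    intro x
    rw [hF x]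
    congr 1; funext p
    rw [hg_def]; dsimp only
    rw [Complex.exp_add]; ring
  obtain ⟨x₀, hx₀⟩ := hUne
  obtain ⟨ε, εpos, hball⟩ := Metric.isOpen_iff.1 hU x₀ hx₀
  have hFzero : ∀ x, F x = 0 := by
    intro x
    set v := x - x₀ with hv
    set c : EuclideanSpace ℝ (Fin n) → ℂ := fun p => -I * ((inner ℝ p x₀ : ℝ) : ℝ) with hc
    set d : EuclideanSpace ℝ (Fin n) → ℂ := fun p => I * ((inner ℝ p v : ℝ) : ℝ) with hd
    have hipc : ∀ w : EuclideanSpace ℝ (Fin n),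
        Continuous fun p : EuclideanSpace ℝ (Fin n) => (inner ℝ p w : ℝ) :=
      fun w => continuous_id.inner continuous_const
    have hc_cont : Continuous c := by
      rw [hc]; exact continuous_const.mul (Complex.continuous_ofReal.comp (hipc x₀))
    have hd_cont : Continuous d := by
      rw [hd]; exact continuous_const.mul (Complex.continuous_ofReal.comp (hipc v))
    set φ : ℂ → ℂ := fun z => ∫ p, g p * Complex.exp (c p - z * d p) with hφ
    have hφreal : ∀ s : ℝ, φ (s : ℂ) = F (x₀ + s • v) := by
      intro s
      rw [hF' (x₀ + s • v), hφ]
      dsimp only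
      congr 1; funext p
      congr 2
      rw [hc, hd]; dsimp only
      have h1 : (inner ℝ p (x₀ + s • v) : ℝ) = (inner ℝ p x₀ : ℝ) + s * (inner ℝ p v : ℝ) := by
        rw [inner_add_right, real_inner_smul_right]
      rw [h1]; push_cast; ring
    have hmeas : ∀ z : ℂ, AEStronglyMeasurable (fun p => g p * Complex.exp (c p - z * d p))
        (volume : Measure (EuclideanSpace ℝ (Fin n))) := by
      intro z
      apply Continuous.aestronglyMeasurable
      exact hg_cont.mul (Complex.continuous_exp.comp
        (hc_cont.sub (continuous_const.mul hd_cont)))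
    have hintz : ∀ z : ℂ, Integrable (fun p => g p * Complex.exp (c p - z * d p)) := by
      intro z
      apply Continuous.integrable_of_hasCompactSupport
      · exact hg_cont.mul (Complex.continuous_exp.comp
          (hc_cont.sub (continuous_const.mul hd_cont)))
      · exact hg_supp.mul_right
    have hre : ∀ (z : ℂ) (p : EuclideanSpace ℝ (Fin n)), (c p - z * d p).re = z.im * (inner ℝ p v : ℝ) := by
      intro z p
      rw [hc, hd]
      simp only [Complex.sub_re, Complex.neg_re, Complex.mul_re, Complex.mul_im,
        Complex.I_re, Complex.I_im, Complex.ofReal_re, Complex.ofReal_im]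
      ring
    have hφdiff : Differentiable ℂ φ := by
      intro z₀
      set bound : EuclideanSpace ℝ (Fin n) → ℝ := fun p =>
        ‖g p‖ * |(inner ℝ p v : ℝ)| * Real.exp ((|z₀.im| + 1) * |(inner ℝ p v : ℝ)|) with hbd
      have hbound_cont : Continuous bound := by
        rw [hbd]
        exact (hg_cont.norm.mul (hipc v).abs).mul
          (Real.continuous_exp.comp (continuous_const.mul (hipc v).abs))
      have hbound_supp : HasCompactSupport bound := by
        rw [hbd]
        exact (hg_supp.norm.mul_right).mul_right
      have hbound_int : Integrable bound :=
        hbound_cont.integrable_of_hasCompactSupport hbound_supp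
      have key := hasDerivAt_integral_of_dominated_loc_of_deriv_le (μ := (volume : Measure (EuclideanSpace ℝ (Fin n))))
        (F := fun z p => g p * Complex.exp (c p - z * d p))
        (F' := fun z p => g p * (Complex.exp (c p - z * d p) * (-(d p))))
        (x₀ := z₀) (bound := bound) (Metric.ball_mem_nhds z₀ one_pos)
        (Filter.Eventually.of_forall fun z => hmeas z)
        (hintz z₀)
        ?_ ?_ hbound_int ?_
      · exact key.2.differentiableAt
      · apply Continuous.aestronglyMeasurable
        apply hg_cont.mul
        exact (Complex.continuous_exp.comp
          (hc_cont.sub (continuous_const.mul hd_cont))).mul hd_cont.neg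
      · apply Filter.Eventually.of_forall
        intro p z hz
        have hdn : ‖-(d p)‖ = |(inner ℝ p v : ℝ)| := by
          rw [norm_neg, hd]
          show ‖I * ((inner ℝ p v : ℝ) : ℂ)‖ = _
          rw [norm_mul, Complex.norm_I, one_mul, Complex.norm_real, Real.norm_eq_abs]
        have hexp : ‖Complex.exp (c p - z * d p)‖ = Real.exp (z.im * (inner ℝ p v : ℝ)) := by
          rw [Complex.norm_exp, hre]
        rw [norm_mul, norm_mul (Complex.exp (c p - z * d p)) (-(d p)), hdn, hexp, hbd]
        have him : |z.im| ≤ |z₀.im| + 1 := by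
          have h1 : |z.im - z₀.im| ≤ ‖z - z₀‖ := by
            simpa using Complex.abs_im_le_norm (z - z₀)
          have h2 : ‖z - z₀‖ < 1 := by
            rw [← Complex.dist_eq]; exact Metric.mem_ball.1 hz
          calc |z.im| ≤ |z₀.im| + |z.im - z₀.im| := by
                have := abs_sub_abs_le_abs_sub z.im z₀.im; linarith [abs_add_le z₀.im (z.im - z₀.im),
                  abs_sub_abs_le_abs_sub z.im z₀.im]
            _ ≤ |z₀.im| + 1 := by linarith
        have hle : z.im * (inner ℝ p v : ℝ) ≤ (|z₀.im| + 1) * |(inner ℝ p v : ℝ)| := by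
          calc z.im * (inner ℝ p v : ℝ) ≤ |z.im * (inner ℝ p v : ℝ)| := le_abs_self _
            _ = |z.im| * |(inner ℝ p v : ℝ)| := abs_mul _ _
            _ ≤ (|z₀.im| + 1) * |(inner ℝ p v : ℝ)| := by
                apply mul_le_mul_of_nonneg_right him (abs_nonneg _)
        have := Real.exp_le_exp.2 hle
        calc ‖g p‖ * (Real.exp (z.im * (inner ℝ p v : ℝ)) * |(inner ℝ p v : ℝ)|)
            ≤ ‖g p‖ * (Real.exp ((|z₀.im| + 1) * |(inner ℝ p v : ℝ)|) * |(inner ℝ p v : ℝ)|) := by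
              apply mul_le_mul_of_nonneg_left _ (norm_nonneg _)
              exact mul_le_mul_of_nonneg_right this (abs_nonneg _)
          _ = ‖g p‖ * |(inner ℝ p v : ℝ)| * Real.exp ((|z₀.im| + 1) * |(inner ℝ p v : ℝ)|) := by ring
      · apply Filter.Eventually.of_forall
        intro p z _
        have h1 : HasDerivAt (fun z : ℂ => c p - z * d p) (-(d p)) z := by
          simpa using (hasDerivAt_id z).mul_const (d p) |>.const_sub (c p)
        exact (h1.cexp).const_mul (g p)
    have hφan : AnalyticOnNhd ℂ φ Set.univ :=
      hφdiff.differentiableOn.analyticOnNhd isOpen_univ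
    have hfreq : ∃ᶠ z in 𝓝[≠] (0 : ℂ), φ z = 0 := by
      rw [Filter.frequently_iff]
      intro s hs
      obtain ⟨u, hu_open, hu0, hus⟩ := mem_nhdsWithin.1 hs
      obtain ⟨r, rpos, hru⟩ := Metric.isOpen_iff.1 hu_open 0 hu0
      set δ := ε / (‖v‖ + 1) with hδ
      have δpos : 0 < δ := div_pos εpos (by positivity)
      set s₀ := min (r / 2) (δ / 2) with hs₀
      have s₀pos : 0 < s₀ := lt_min (by linarith) (by linarith)
      refine ⟨(s₀ : ℂ), hus ⟨hru ?_, ?_⟩, ?_⟩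
      · rw [Metric.mem_ball, dist_zero_right]
        simp only [Complex.norm_real, Real.norm_eq_abs, abs_of_pos s₀pos]
        calc s₀ ≤ r / 2 := min_le_left _ _
          _ < r := by linarith
      · simp only [Set.mem_compl_iff, Set.mem_singleton_iff]
        exact_mod_cast s₀pos.ne'
      · rw [hφreal s₀]
        apply hFU
        apply hball
        rw [Metric.mem_ball, dist_eq_norm]
        have : x₀ + s₀ • v - x₀ = s₀ • v := by abel
        rw [this, norm_smul, Real.norm_eq_abs, abs_of_pos s₀pos]
        have h1 : s₀ ≤ δ / 2 := min_le_right _ _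
        have h2 : δ * (‖v‖ + 1) = ε := by
          rw [hδ]; field_simp
        have h3 : s₀ * ‖v‖ ≤ δ / 2 * ‖v‖ :=
          mul_le_mul_of_nonneg_right h1 (norm_nonneg _)
        have h4 : δ / 2 * ‖v‖ < δ * (‖v‖ + 1) := by
          nlinarith [norm_nonneg v]
        linarith
    have := hφan.eqOn_zero_of_preconnected_of_frequently_eq_zero
      isPreconnected_univ (Set.mem_univ (0 : ℂ)) hfreq
    have h1 : φ 1 = 0 := this (Set.mem_univ 1)
    have h2 : φ ((1 : ℝ) : ℂ) = F (x₀ + (1 : ℝ) • v) := hφreal 1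
    rw [Complex.ofReal_one] at h2
    have h3 : x₀ + (1 : ℝ) • v = x := by rw [hv]; simp
    rw [h3] at h2
    rw [← h2, h1]
  -- Fourier transform of g is zero
  have hFg : 𝓕 g = 0 := by
    funext ξ
    rw [Real.fourier_eq']
    have : (∫ p, Complex.exp ((↑(-2 * π * (inner ℝ p ξ : ℝ)) * I)) • g p)
        = F ((2 * π) • ξ) := by
      rw [hF' ((2 * π) • ξ)]
      congr 1; funext p
      rw [smul_eq_mul]
      have h1 : (inner ℝ p ((2 * π) • ξ) : ℝ) = 2 * π * (inner ℝ p ξ : ℝ) := real_inner_smul_right _ _ _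
      rw [h1]
      rw [mul_comm]
      congr 1
      push_cast
      ring
    rw [this, hFzero]
    rfl
  have hFg_int : Integrable (𝓕 g) := by rw [hFg]; exact integrable_zero _ _ _
  have hg0 : ∀ p, g p = 0 := by
    intro p
    have hinv := hg_int.fourierInv_fourier_eq hFg_int (hg_cont.continuousAt (x := p))
    rw [hFg] at hinv
    rw [← hinv]
    rw [Real.fourierInv_eq]
    simp
  funext p
  have := hg0 p
  rw [hg_def] at this
  dsimp only at this
  rcases mul_eq_zero.1 this with h | h
  · exact h
  · exact absurd h (Complex.exp_ne_zero _)
end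

section
/- Let η > 0. Suppose χ: ℝ → ℂ² with components χ₊, χ₋ ∈ L¹(ℝ) satisfies χ_α(p) = T(αp)χ_{-α}(p) + R(αp)χ_α(-p) for all p ∈ ℝ and α = ±1, where T(p) = p/(p+iη), R(p) = -iη/(p+iη). Then ∫_ℝ (χ₊(p) - χ₋(p)) dp = 0. -/
open Complex MeasureTheory

theorem continuity_at_impurity (η : ℝ) (hη : 0 < η)
    (T R : ℝ → ℂ)
    (hT : ∀ p : ℝ, T p = (p : ℂ) / ((p : ℂ) + η * I))
    (hR : ∀ p : ℝ, R p = (-I * η) / ((p : ℂ) + η * I))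
    (χp χm : ℝ → ℂ)
    (hint_p : Integrable χp) (hint_m : Integrable χm)
    (hχp : ∀ p : ℝ, χp p = T p * χm p + R p * χp (-p))
    (hχm : ∀ p : ℝ, χm p = T (-p) * χp p + R (-p) * χm (-p)) :
    ∫ p : ℝ, (χp p - χm p) = 0 := by
  have hηC : (η : ℂ) ≠ 0 := by exact_mod_cast hη.ne'
  have hodd : ∀ p : ℝ, χp p - χm p = -(χp (-p) - χm (-p)) := by
    intro p
    have hd1 : (p : ℂ) + η * I ≠ 0 := by
      intro h
      have := congrArg Complex.im h
      simp [Complex.add_im, Complex.mul_im] at this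
      exact hη.ne' this
    have hd2 : ((-p : ℝ) : ℂ) + η * I ≠ 0 := by
      intro h
      have := congrArg Complex.im h
      simp [Complex.add_im, Complex.mul_im] at this
      exact hη.ne' this
    have e1 := hχp p
    have e2 := hχm p
    rw [hT, hR] at e1
    rw [hT, hR] at e2
    have e1' : ((p : ℂ) + η * I) * χp p = (p : ℂ) * χm p + (-I * η) * χp (-p) := by
      field_simp at e1
      linear_combination e1
    have e2' : (((-p : ℝ) : ℂ) + η * I) * χm p = ((-p : ℝ) : ℂ) * χp p + (-I * η) * χm (-p) := by
      have hd2' : -(p : ℂ) + (η : ℂ) * I ≠ 0 := by push_cast at hd2; exact hd2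
      rw [e2]
      push_cast
      field_simp [hd2']
    have key : (η : ℂ) * I * (χp p - χm p) = -((η : ℂ) * I) * (χp (-p) - χm (-p)) := by
      push_cast at e2' ⊢
      linear_combination e1' - e2'
    have hne : (η : ℂ) * I ≠ 0 := mul_ne_zero hηC I_ne_zero
    have := mul_left_cancel₀ hne (by linear_combination key :
      (η : ℂ) * I * (χp p - χm p) = (η : ℂ) * I * (-(χp (-p) - χm (-p))))
    exact this
  have hint : Integrable (fun p => χp p - χm p) := hint_p.sub hint_m
  have h1 : ∫ p : ℝ, (χp (-p) - χm (-p)) = ∫ p : ℝ, (χp p - χm p) :=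
    integral_neg_eq_self (fun p => χp p - χm p) volume
  have h2 : ∫ p : ℝ, (χp (-p) - χm (-p)) = -∫ p : ℝ, (χp p - χm p) := by
    have : ∫ p : ℝ, (χp (-p) - χm (-p)) = ∫ p : ℝ, -(χp p - χm p) := by
      congr 1
      ext p
      have := hodd (-p)
      rw [neg_neg] at this
      rw [this]
    rw [this, integral_neg]
  have h3 := h1.symm.trans h2
  have := congrArg Complex.re h3
  have := congrArg Complex.im h3
  simp only [Complex.neg_re, Complex.neg_im] at *
  apply Complex.ext <;> simp <;> linarith
end
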